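/- arXiv:2307.13242 — 2 statements merged into one kernel-verified Lean document; each statement's English description precedes it below -/
import Mathlib

section
/- Every finite generalized ordinal potential game possesses a pure-strategy Nash equilibrium: if Φ : A → ℝ satisfies that u_i(a_i, a_{-i}) - u_i(a'_i, a_{-i}) > 0 implies Φ(a_i, a_{-i}) - Φ(a'_i, a_{-i}) > 0 for all players i and all unilateral deviations, then any maximizer of Φ over the finite profile set A is a pure-strategy Nash equilibrium. -/
/-!
A unilateral deviation from `a*` can be undone by deviating back. If the deviation raised
player `i`'s utility strictly above `u i a*`, then reverting it would strictly lower that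
utility, so by the potential property the deviated profile has strictly larger potential than
`a*`, contradicting the maximality of `Φ a*`.
-/

open Function

theorem utility_update_le_of_potential_update_le {ι : Type*} [DecidableEq ι] {A : ι → Type*}
    {u : ι → (∀ i, A i) → ℝ} {Φ : (∀ i, A i) → ℝ}
    (hpot : ∀ (i : ι) (a : ∀ j, A j) (ai' : A i),
      u i a > u i (update a i ai') → Φ a > Φ (update a i ai'))
    {a : ∀ i, A i} {i : ι} {ai : A i} (hΦ : Φ (update a i ai) ≤ Φ a) :
    u i (update a i ai) ≤ u i a := by
  have hrevert : update (update a i ai) i (a i) = a := by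
    rw [update_idem, update_eq_self]
  by_contra! hgain
  have := hpot i (update a i ai) (a i) (by rwa [hrevert])
  rw [hrevert] at this
  exact hΦ.not_gt this

theorem stmt_1_general {ι : Type*} [DecidableEq ι]
    (A : ι → Type*)
    (u : ι → (∀ i, A i) → ℝ) (Φ : (∀ i, A i) → ℝ)
    (hpot : ∀ (i : ι) (a : ∀ j, A j) (ai' : A i),
      u i a > u i (Function.update a i ai') → Φ a > Φ (Function.update a i ai'))
    (astar : ∀ i, A i) (hmax : ∀ a, Φ a ≤ Φ astar) :
    ∀ (i : ι) (ai : A i), u i (Function.update astar i ai) ≤ u i astar :=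
  fun _ _ => utility_update_le_of_potential_update_le hpot (hmax _)

/-- Every finite generalized ordinal potential game possesses a pure-strategy
Nash equilibrium: any maximizer of the potential Φ is a PSNE. -/
theorem stmt_1 {ι : Type*} [Fintype ι] [Nonempty ι] [DecidableEq ι]
    (A : ι → Type*) [∀ i, Fintype (A i)] [∀ i, Nonempty (A i)]
    (u : ι → (∀ i, A i) → ℝ) (Φ : (∀ i, A i) → ℝ)
    (hpot : ∀ (i : ι) (a : ∀ j, A j) (ai' : A i),
      u i a > u i (Function.update a i ai') → Φ a > Φ (Function.update a i ai'))
    (astar : ∀ i, A i) (hmax : ∀ a, Φ a ≤ Φ astar) :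
    ∀ (i : ι) (ai : A i), u i (Function.update astar i ai) ≤ u i astar :=
  stmt_1_general A u Φ hpot astar hmax
end

section
/- In a socially concave game (with convex compact action sets in ℝ^d), if π is a coarse correlated equilibrium, then the expected profile ā = E_π[a] is a pure Nash equilibrium. Specifically: (i) each player's expected utility under π equals its utility at ā, i.e., E_π[u_i(a)] = u_i(ā), and (ii) u_i(ā) ≥ u_i(a'_i, ā_{-i}) for every player i and every action a'_i. -/
/-!
By Jensen's inequality for the functions `u i` (convex in the opponents' actions), the deviation
payoff of player `i` to `x` at the mean profile `ā` is at most its expected deviation payoff, which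
the coarse correlated equilibrium bounds by `E_π[u i]`; with `x = ā i` this gives
`u i ā ≤ E_π[u i]` for every `i`. Jensen's inequality for the concave sum `∑ i, u i` gives the
reverse inequality between the sums, so each of these inequalities is an equality, and the chain
for an arbitrary deviation `x` then reads `u i (ā with i ↦ x) ≤ u i ā`.
-/

open MeasureTheory Set Function

theorem ContinuousOn.integrable_of_ae_mem_isCompact {X F : Type*} [TopologicalSpace X] [T2Space X]
    [MeasurableSpace X] [OpensMeasurableSpace X] [NormedAddCommGroup F] {μ : Measure X}
    [IsFiniteMeasure μ] {K : Set X} {f : X → F} (hf : ContinuousOn f K) (hK : IsCompact K)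
    (hμ : ∀ᵐ x ∂μ, x ∈ K) : Integrable f μ := by
  simpa only [IntegrableOn, Measure.restrict_eq_self_of_ae_mem hμ] using
    hf.integrableOn_compact (μ := μ) hK

theorem integral_update_const {X ι : Type*} [MeasurableSpace X] [Fintype ι] [DecidableEq ι]
    {E : ι → Type*} [∀ i, NormedAddCommGroup (E i)] [∀ i, NormedSpace ℝ (E i)]
    [∀ i, CompleteSpace (E i)] {μ : Measure X} [IsProbabilityMeasure μ] {f : X → ∀ i, E i}
    (hf : Integrable f μ) (i : ι) (x : E i) :
    ∫ a, update (f a) i x ∂μ = update (∫ a, f a ∂μ) i x := by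
  have hupd : ∀ j, Integrable (fun a => update (f a) i x j) μ := by
    intro j
    rcases eq_or_ne j i with rfl | hj
    · simp
    · simpa [hj] using hf.eval j
  ext j
  rw [eval_integral hupd]
  rcases eq_or_ne j i with rfl | hj
  · simp
  · simp [hj, eval_integral hf.eval]

section Game

variable {ι : Type*} [Fintype ι] {E : ι → Type*}
  [∀ i, NormedAddCommGroup (E i)] [∀ i, NormedSpace ℝ (E i)] [∀ i, CompleteSpace (E i)]
  [MeasurableSpace (∀ i, E i)] [OpensMeasurableSpace (∀ i, E i)]
  {S : ∀ i, Set (E i)} {u : ι → (∀ i, E i) → ℝ} {μ : Measure (∀ i, E i)} [IsProbabilityMeasure μ]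

theorem sum_integral_le_sum_apply_integral (hK : IsCompact (univ.pi S))
    (hsupp : ∀ᵐ a ∂μ, a ∈ univ.pi S) (hcont : ∀ i, Continuous (u i))
    (hconc : ConcaveOn ℝ (univ.pi S) (fun a => ∑ i, u i a)) :
    ∑ i, ∫ a, u i a ∂μ ≤ ∑ i, u i (∫ a, a ∂μ) := by
  have hint : ∀ i, Integrable (u i) μ := fun i =>
    (hcont i).continuousOn.integrable_of_ae_mem_isCompact hK hsupp
  rw [← integral_finsetSum _ fun i _ => hint i]
  exact hconc.le_map_integral (continuous_finsetSum _ fun i _ => hcont i).continuousOn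
    hK.isClosed hsupp (continuous_id.continuousOn.integrable_of_ae_mem_isCompact hK hsupp)
    (integrable_finsetSum _ fun i _ => hint i)

variable [DecidableEq ι]

def IsCoarseCorrelatedEquilibrium (S : ∀ i, Set (E i)) (u : ι → (∀ i, E i) → ℝ)
    (μ : Measure (∀ i, E i)) : Prop :=
  ∀ i, ∀ x ∈ S i, ∫ a, u i (update a i x) ∂μ ≤ ∫ a, u i a ∂μ

def IsNashEquilibrium (S : ∀ i, Set (E i)) (u : ι → (∀ i, E i) → ℝ) (a : ∀ i, E i) : Prop :=
  ∀ i, ∀ x ∈ S i, u i (update a i x) ≤ u i a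

theorem apply_update_integral_le (hK : IsCompact (univ.pi S)) (hsupp : ∀ᵐ a ∂μ, a ∈ univ.pi S)
    {i : ι} (hcont : Continuous (u i)) {x : E i} (hx : x ∈ S i)
    (hconv : ConvexOn ℝ {b | b ∈ univ.pi S ∧ b i = x} (u i)) :
    u i (update (∫ a, a ∂μ) i x) ≤ ∫ a, u i (update a i x) ∂μ := by
  have hupd : Continuous fun a : ∀ j, E j => update a i x := continuous_id.update i continuous_const
  have hslice : IsClosed {b | b ∈ univ.pi S ∧ b i = x} :=
    hK.isClosed.inter (isClosed_eq (continuous_apply i) continuous_const)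
  have hmem : ∀ᵐ a ∂μ, update a i x ∈ {b | b ∈ univ.pi S ∧ b i = x} := by
    filter_upwards [hsupp] with a ha
    exact ⟨(update_mem_pi_iff_of_mem ha).2 fun _ => hx, update_self i x a⟩
  rw [← integral_update_const (f := fun a => a)
    (continuous_id.continuousOn.integrable_of_ae_mem_isCompact hK hsupp) i x]
  exact hconv.map_integral_le hcont.continuousOn hslice hmem
    (hupd.continuousOn.integrable_of_ae_mem_isCompact hK hsupp)
    ((hcont.comp hupd).continuousOn.integrable_of_ae_mem_isCompact hK hsupp)

theorem IsCoarseCorrelatedEquilibrium.apply_integral_le (hCCE : IsCoarseCorrelatedEquilibrium S u μ)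
    (hSconv : ∀ i, Convex ℝ (S i)) (hK : IsCompact (univ.pi S))
    (hsupp : ∀ᵐ a ∂μ, a ∈ univ.pi S) (i : ι) (hcont : Continuous (u i))
    (hconv : ∀ x, ConvexOn ℝ {b | b ∈ univ.pi S ∧ b i = x} (u i)) :
    u i (∫ a, a ∂μ) ≤ ∫ a, u i a ∂μ := by
  have hmean : ∫ a, a ∂μ ∈ univ.pi S :=
    (convex_pi fun i _ => hSconv i).integral_mem hK.isClosed hsupp
      (continuous_id.continuousOn.integrable_of_ae_mem_isCompact hK hsupp)
  have := apply_update_integral_le hK hsupp hcont (hmean i trivial) (hconv _)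
  rw [update_eq_self] at this
  exact this.trans (hCCE i _ (hmean i trivial))

theorem IsCoarseCorrelatedEquilibrium.integral_eq_apply_integral
    (hCCE : IsCoarseCorrelatedEquilibrium S u μ) (hSconv : ∀ i, Convex ℝ (S i))
    (hK : IsCompact (univ.pi S)) (hsupp : ∀ᵐ a ∂μ, a ∈ univ.pi S) (hcont : ∀ i, Continuous (u i))
    (hconc : ConcaveOn ℝ (univ.pi S) (fun a => ∑ i, u i a))
    (hconv : ∀ i x, ConvexOn ℝ {b | b ∈ univ.pi S ∧ b i = x} (u i)) (i : ι) :
    ∫ a, u i a ∂μ = u i (∫ a, a ∂μ) := by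
  have hle : ∀ j ∈ Finset.univ, u j (∫ a, a ∂μ) ≤ ∫ a, u j a ∂μ := fun j _ =>
    hCCE.apply_integral_le hSconv hK hsupp j (hcont j) (hconv j)
  exact ((Finset.sum_eq_sum_iff_of_le hle).1
    ((Finset.sum_le_sum hle).antisymm (sum_integral_le_sum_apply_integral hK hsupp hcont hconc))
    i (Finset.mem_univ i)).symm

theorem IsCoarseCorrelatedEquilibrium.isNashEquilibrium_integral
    (hCCE : IsCoarseCorrelatedEquilibrium S u μ) (hSconv : ∀ i, Convex ℝ (S i))
    (hK : IsCompact (univ.pi S)) (hsupp : ∀ᵐ a ∂μ, a ∈ univ.pi S) (hcont : ∀ i, Continuous (u i))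
    (hconc : ConcaveOn ℝ (univ.pi S) (fun a => ∑ i, u i a))
    (hconv : ∀ i x, ConvexOn ℝ {b | b ∈ univ.pi S ∧ b i = x} (u i)) :
    IsNashEquilibrium S u (∫ a, a ∂μ) := fun i x hx =>
  (apply_update_integral_le hK hsupp (hcont i) hx (hconv i x)).trans <|
    (hCCE i x hx).trans_eq (hCCE.integral_eq_apply_integral hSconv hK hsupp hcont hconc hconv i)

end Game

theorem stmt_5_general {ι : Type*} [Fintype ι] [DecidableEq ι]
    (d : ι → ℕ)
    (S : ∀ i, Set (EuclideanSpace ℝ (Fin (d i))))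
    (hSconv : ∀ i, Convex ℝ (S i)) (hScomp : ∀ i, IsCompact (S i))
    (u : ι → (∀ i, EuclideanSpace ℝ (Fin (d i))) → ℝ)
    (hcont : ∀ i, Continuous (u i))
    (hconc : ConcaveOn ℝ (Set.univ.pi S) (fun a => ∑ i, u i a))
    (hconv : ∀ (i : ι) (ai : EuclideanSpace ℝ (Fin (d i))),
      ConvexOn ℝ {b | b ∈ Set.univ.pi S ∧ b i = ai} (u i))
    (π : Measure (∀ i, EuclideanSpace ℝ (Fin (d i))))
    [IsProbabilityMeasure π]
    (hsupp : ∀ᵐ a ∂π, a ∈ Set.univ.pi S)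
    (hCCE : ∀ (i : ι), ∀ ai' ∈ S i,
      (∫ a, u i (Function.update a i ai') ∂π) ≤ ∫ a, u i a ∂π)
    (abar : ∀ i, EuclideanSpace ℝ (Fin (d i)))
    (habar : abar = ∫ a, a ∂π) :
    (∀ i, (∫ a, u i a ∂π) = u i abar) ∧
    (∀ (i : ι), ∀ ai' ∈ S i, u i (Function.update abar i ai') ≤ u i abar) := by
  have hCCE : IsCoarseCorrelatedEquilibrium S u π := hCCE
  have hK : IsCompact (univ.pi S) := isCompact_univ_pi hScomp
  subst habar
  exact ⟨hCCE.integral_eq_apply_integral hSconv hK hsupp hcont hconc hconv,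
    hCCE.isNashEquilibrium_integral hSconv hK hsupp hcont hconc hconv⟩

/-- In a socially concave game with convex compact action sets in ℝ^d, the
expected profile of a coarse correlated equilibrium is a pure Nash
equilibrium: each player's expected utility equals its utility at the mean
profile, and no player can gain by deviating from the mean profile. -/
theorem stmt_5 {ι : Type*} [Fintype ι] [Nonempty ι] [DecidableEq ι]
    (d : ι → ℕ)
    (S : ∀ i, Set (EuclideanSpace ℝ (Fin (d i))))
    (hSne : ∀ i, (S i).Nonempty)
    (hSconv : ∀ i, Convex ℝ (S i)) (hScomp : ∀ i, IsCompact (S i))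
    (u : ι → (∀ i, EuclideanSpace ℝ (Fin (d i))) → ℝ)
    (hcont : ∀ i, Continuous (u i))
    (hconc : ConcaveOn ℝ (Set.univ.pi S) (fun a => ∑ i, u i a))
    (hconv : ∀ (i : ι) (ai : EuclideanSpace ℝ (Fin (d i))),
      ConvexOn ℝ {b | b ∈ Set.univ.pi S ∧ b i = ai} (u i))
    (π : Measure (∀ i, EuclideanSpace ℝ (Fin (d i))))
    [IsProbabilityMeasure π]
    (hsupp : ∀ᵐ a ∂π, a ∈ Set.univ.pi S)
    (hCCE : ∀ (i : ι), ∀ ai' ∈ S i,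
      (∫ a, u i (Function.update a i ai') ∂π) ≤ ∫ a, u i a ∂π)
    (abar : ∀ i, EuclideanSpace ℝ (Fin (d i)))
    (habar : abar = ∫ a, a ∂π) :
    (∀ i, (∫ a, u i a ∂π) = u i abar) ∧
    (∀ (i : ι), ∀ ai' ∈ S i, u i (Function.update abar i ai') ≤ u i abar) :=
  stmt_5_general d S hSconv hScomp u hcont hconc hconv π hsupp hCCE abar habar
end
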